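/- arXiv:1206.2850 — 2 statements merged into one kernel-verified Lean document; each statement's English description precedes it below -/
import Mathlib

section
/- If d : [0,T]×ℝ³ → ℝ³ is a smooth solution of ∂_t d + u·∇d − Δd = |∇d|²d with |d(0,x)| = 1 for all x, and d is bounded with bounded derivatives, then |d(t,x)| = 1 for all t ∈ [0,T] and x ∈ ℝ³. -/
open scoped BigOperators

/-- Partial derivative in the `i`-th coordinate direction. -/
noncomputable def pd (i : Fin 3) (f : (Fin 3 → ℝ) → ℝ) (x : Fin 3 → ℝ) : ℝ :=
  fderiv ℝ f x (Pi.single i 1)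

open Filter Set Topology

lemma deriv_nonneg_of_max (g : ℝ → ℝ) (t₁ : ℝ) (ht : 0 < t₁)
    (hg : DifferentiableAt ℝ g t₁) (hmax : ∀ s ∈ Set.Icc (0:ℝ) t₁, g s ≤ g t₁) :
    0 ≤ deriv g t₁ := by
  have h := hasDerivAt_iff_tendsto_slope.1 hg.hasDerivAt
  have h2 : Tendsto (slope g t₁) (𝓝[<] t₁) (𝓝 (deriv g t₁)) :=
    h.mono_left (nhdsWithin_mono _ (fun s hs => ne_of_lt hs))
  refine ge_of_tendsto h2 ?_
  filter_upwards [Ioo_mem_nhdsLT_of_mem ⟨ht, le_refl t₁⟩] with s hs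
  have hnum : g s - g t₁ ≤ 0 := sub_nonpos.2 (hmax s ⟨hs.1.le, hs.2.le⟩)
  have hden : s - t₁ < 0 := sub_neg.2 hs.2
  rw [slope_def_field]
  exact div_nonneg_of_nonpos hnum hden.le

lemma second_deriv_nonpos_of_max (g : ℝ → ℝ) (hg : Differentiable ℝ g)
    (hg2 : Differentiable ℝ (deriv g)) (hgc : Continuous g)
    (hmax : ∀ s, g s ≤ g 0) : deriv (deriv g) 0 ≤ 0 := by
  by_contra h
  push_neg at h
  have hloc : IsLocalMax g 0 := Filter.Eventually.of_forall hmax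
  have hg' : deriv g 0 = 0 := hloc.deriv_eq_zero
  have hd : HasDerivAt (deriv g) (deriv (deriv g) 0) 0 := (hg2 0).hasDerivAt
  have hs := hasDerivAt_iff_tendsto_slope.1 hd
  have hs2 : Tendsto (slope (deriv g) 0) (𝓝[>] (0:ℝ)) (𝓝 (deriv (deriv g) 0)) :=
    hs.mono_left (nhdsWithin_mono _ (fun s hs => ne_of_gt hs))
  have hev : ∀ᶠ s in 𝓝[>] (0:ℝ), 0 < slope (deriv g) 0 s := hs2.eventually (lt_mem_nhds h)
  obtain ⟨δ, hδ, hsub⟩ := mem_nhdsGT_iff_exists_Ioo_subset.1 hev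
  have hpos : ∀ s ∈ Ioo (0:ℝ) δ, 0 < deriv g s := by
    intro s hsm
    have h1 : 0 < slope (deriv g) 0 s := hsub hsm
    rw [slope_def_field, hg', sub_zero, sub_zero] at h1
    have hsp : (0:ℝ) < s := hsm.1
    by_contra hle
    push_neg at hle
    have : deriv g s / s ≤ 0 := div_nonpos_of_nonpos_of_nonneg hle hsp.le
    linarith
  have hmono : StrictMonoOn g (Icc 0 δ) := by
    refine strictMonoOn_of_deriv_pos (convex_Icc _ _) (hgc.continuousOn) ?_
    intro s hsm
    rw [interior_Icc] at hsm
    exact hpos s hsm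
  have : g 0 < g δ := hmono ⟨le_refl 0, (hδ : (0:ℝ) < δ).le⟩ ⟨hδ.le, le_refl δ⟩ hδ
  exact absurd (hmax δ) (not_le.2 this)


section pdlemmas
variable {i : Fin 3} {f g : (Fin 3 → ℝ) → ℝ} {x : Fin 3 → ℝ}

lemma pd_mul (hf : DifferentiableAt ℝ f x) (hg : DifferentiableAt ℝ g x) :
    pd i (fun y => f y * g y) x = pd i f x * g x + f x * pd i g x := by
  unfold pd
  rw [fderiv_fun_mul hf hg]
  simp only [ContinuousLinearMap.add_apply, ContinuousLinearMap.smul_apply, smul_eq_mul]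
  ring

lemma pd_sum {n : ℕ} (F : Fin n → (Fin 3 → ℝ) → ℝ)
    (hF : ∀ k, DifferentiableAt ℝ (F k) x) :
    pd i (fun y => ∑ k, F k y) x = ∑ k, pd i (F k) x := by
  unfold pd
  rw [fderiv_fun_sum (fun k _ => hF k)]
  simp

lemma pd_sub_const (c : ℝ) :
    pd i (fun y => f y - c) x = pd i f x := by
  unfold pd
  rw [fderiv_sub_const]

lemma pd_const_mul (c : ℝ) (hf : DifferentiableAt ℝ f x) :
    pd i (fun y => c * f y) x = c * pd i f x := by
  unfold pd
  rw [fderiv_const_mul hf]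
  simp

lemma pd_sub (hf : DifferentiableAt ℝ f x) (hg : DifferentiableAt ℝ g x) :
    pd i (fun y => f y - g y) x = pd i f x - pd i g x := by
  unfold pd
  rw [fderiv_fun_sub hf hg]
  simp

lemma pd_sq (hf : DifferentiableAt ℝ f x) :
    pd i (fun y => f y ^ 2) x = 2 * f x * pd i f x := by
  have : (fun y => f y ^ 2) = fun y => f y * f y := by ext y; ring
  rw [this, pd_mul hf hf]
  ring

lemma pd_coord (j : Fin 3) :
    pd i (fun y => y j) x = if j = i then (1:ℝ) else 0 := by
  unfold pd
  have : (fun y : Fin 3 → ℝ => y j) = (ContinuousLinearMap.proj j : (Fin 3 → ℝ) →L[ℝ] ℝ) := rfl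
  rw [this, ContinuousLinearMap.fderiv]
  simp [Pi.single_apply]

lemma diff_coord (j : Fin 3) (x : Fin 3 → ℝ) :
    DifferentiableAt ℝ (fun y : Fin 3 → ℝ => y j) x :=
  (ContinuousLinearMap.proj j : (Fin 3 → ℝ) →L[ℝ] ℝ).differentiable.differentiableAt

lemma pd_coord_sq_sum :
    pd i (fun y => ∑ j, (y j) ^ 2) x = 2 * x i := by
  rw [pd_sum (fun j y => (y j)^2) (fun j => (diff_coord j x).pow 2)]
  have h : ∀ j, pd i (fun y => (y j)^2) x = 2 * x j * (if j = i then (1:ℝ) else 0) := by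
    intro j
    rw [pd_sq (diff_coord j x), pd_coord]
  simp only [h]
  simp [Finset.sum_ite_eq']
end pdlemmas

section line
variable {f : (Fin 3 → ℝ) → ℝ}

lemma line_contDiff (x e : Fin 3 → ℝ) :
    ContDiff ℝ (⊤ : ℕ∞) (fun τ : ℝ => x + τ • e) :=
  contDiff_const.add (contDiff_id.smul contDiff_const)

lemma line_hasDerivAt (hf : Differentiable ℝ f) (x e : Fin 3 → ℝ) (τ : ℝ) :
    HasDerivAt (fun s : ℝ => f (x + s • e)) (fderiv ℝ f (x + τ • e) e) τ := by
  have h1 : HasDerivAt (fun s : ℝ => x + s • e) e τ := by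
    simpa using ((hasDerivAt_id τ).smul_const e).const_add x
  have h2 := (hf (x + τ • e)).hasFDerivAt.comp_hasDerivAt τ h1
  exact h2

lemma pd_contDiff (i : Fin 3) (hf : ContDiff ℝ (⊤ : ℕ∞) f) : ContDiff ℝ (⊤ : ℕ∞) (pd i f) := by
  have h1 : ContDiff ℝ (⊤ : ℕ∞) (fderiv ℝ f) := hf.fderiv_right (by simp)
  exact h1.clm_apply contDiff_const

lemma deriv_line (hf : ContDiff ℝ (⊤ : ℕ∞) f) (x e : Fin 3 → ℝ) :
    deriv (fun s : ℝ => f (x + s • e)) = fun τ => fderiv ℝ f (x + τ • e) e := by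
  funext τ
  exact (line_hasDerivAt (hf.differentiable (by simp)) x e τ).deriv

lemma second_deriv_line (hf : ContDiff ℝ (⊤ : ℕ∞) f) (x : Fin 3 → ℝ) (i : Fin 3) :
    deriv (deriv (fun s : ℝ => f (x + s • (Pi.single i 1 : Fin 3 → ℝ)))) 0 = pd i (pd i f) x := by
  rw [deriv_line hf]
  have : (fun τ : ℝ => fderiv ℝ f (x + τ • (Pi.single i 1 : Fin 3 → ℝ)) (Pi.single i 1))
      = fun τ : ℝ => pd i f (x + τ • (Pi.single i 1 : Fin 3 → ℝ)) := rfl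
  rw [this]
  have h2 := (line_hasDerivAt ((pd_contDiff i hf).differentiable (by simp)) x ((Pi.single i 1 : Fin 3 → ℝ)) 0).deriv
  rw [h2]
  simp [pd]
end line

lemma pd_const_add {i : Fin 3} {f : (Fin 3 → ℝ) → ℝ} {x : Fin 3 → ℝ} (c : ℝ) :
    pd i (fun y => c + f y) x = pd i f x := by
  unfold pd; rw [fderiv_const_add]

lemma pd_neg {i : Fin 3} {f : (Fin 3 → ℝ) → ℝ} {x : Fin 3 → ℝ} :
    pd i (fun y => -f y) x = -pd i f x := by
  unfold pd; rw [fderiv_fun_neg]; simp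

lemma sumsq_contDiff : ContDiff ℝ (⊤ : ℕ∞) (fun y : Fin 3 → ℝ => ∑ j, (y j)^2) :=
  ContDiff.sum fun j _ => ((ContinuousLinearMap.proj j : (Fin 3 → ℝ) →L[ℝ] ℝ).contDiff).pow 2

set_option maxHeartbeats 1000000 in
lemma maxprin (T : ℝ) (hT : 0 ≤ T)
    (u : ℝ → (Fin 3 → ℝ) → (Fin 3 → ℝ)) (M' : ℝ) (hM' : 0 ≤ M')
    (hubd : ∀ t x i, |u t x i| ≤ M')
    (W : ℝ → (Fin 3 → ℝ) → ℝ)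
    (hW : ContDiff ℝ (⊤ : ℕ∞) (fun p : ℝ × (Fin 3 → ℝ) => W p.1 p.2))
    (B : ℝ) (hB : ∀ t x, |W t x| ≤ B)
    (c : ℝ → (Fin 3 → ℝ) → ℝ) (K : ℝ)
    (hc : ∀ t x, c t x ≤ K)
    (hpde : ∀ t ∈ Set.Icc 0 T, ∀ x,
        deriv (fun s => W s x) t
          + (∑ i : Fin 3, u t x i * pd i (fun y => W t y) x)
          - (∑ i : Fin 3, pd i (fun y => pd i (fun z => W t z) y) x)
        = c t x * W t x)
    (hinit : ∀ x, W 0 x = 0) :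
    ∀ t ∈ Set.Icc 0 T, ∀ x, W t x ≤ 0 := by
  set lam : ℝ := K + 3*M' + 7 with hlam
  suffices H : ∀ ε > 0, ∀ t ∈ Set.Icc 0 T, ∀ x,
      Real.exp (-lam*t) * W t x ≤ ε * (1 + ∑ i, (x i)^2) by
    intro t ht x
    by_contra hpos
    push_neg at hpos
    have hE : 0 < Real.exp (-lam*t) := Real.exp_pos _
    have ha : 0 < Real.exp (-lam*t) * W t x := mul_pos hE hpos
    have hS : (0:ℝ) < 1 + ∑ i, (x i)^2 := by positivity
    have h2 := H (Real.exp (-lam*t) * W t x / (2*(1 + ∑ i, (x i)^2))) (by positivity) t ht x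
    have key : Real.exp (-lam*t) * W t x / (2*(1 + ∑ i, (x i)^2)) * (1 + ∑ i, (x i)^2)
        = Real.exp (-lam*t) * W t x / 2 := by
      field_simp
    rw [key] at h2
    linarith
  intro ε hε
  set v : ℝ × (Fin 3 → ℝ) → ℝ :=
    fun p => Real.exp (-lam*p.1) * W p.1 p.2 - ε * (1 + ∑ i, (p.2 i)^2) with hvdef
  suffices Hv : ∀ t ∈ Set.Icc 0 T, ∀ x, v (t,x) ≤ 0 by
    intro t ht x
    have h := Hv t ht x
    simp only [hvdef] at h
    linarith
  by_contra hcon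
  push_neg at hcon
  obtain ⟨t₀, ht₀, x₀, hv0⟩ := hcon
  have hvc : Continuous v := by
    refine Continuous.sub ?_ ?_
    · exact (Real.continuous_exp.comp (continuous_const.mul continuous_fst)).mul hW.continuous
    · exact continuous_const.mul (continuous_const.add
        (continuous_finset_sum _ fun i _ => ((continuous_apply i).comp continuous_snd).pow 2))
  have hBnn : 0 ≤ B := le_trans (abs_nonneg _) (hB 0 x₀)
  set C : ℝ := Real.exp (|lam| * T) * B / ε with hC
  have hCb : ∀ p : ℝ × (Fin 3 → ℝ), p.1 ∈ Set.Icc 0 T → 0 < v p → (∑ i, (p.2 i)^2) ≤ C := by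
    intro p hp hvp
    have e1 : Real.exp (-lam*p.1) ≤ Real.exp (|lam| * T) := by
      apply Real.exp_le_exp.2
      have h1 : -lam*p.1 ≤ |(-lam) * p.1| := le_abs_self _
      have h2 : |(-lam) * p.1| ≤ |lam| * T := by
        rw [abs_mul, abs_neg, abs_of_nonneg hp.1]
        exact mul_le_mul_of_nonneg_left hp.2 (abs_nonneg _)
      linarith
    have e2 : Real.exp (-lam*p.1) * W p.1 p.2 ≤ Real.exp (|lam| * T) * B := by
      calc Real.exp (-lam*p.1) * W p.1 p.2
          ≤ Real.exp (-lam*p.1) * B := by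
            exact mul_le_mul_of_nonneg_left (le_trans (le_abs_self _) (hB _ _)) (Real.exp_pos _).le
        _ ≤ Real.exp (|lam| * T) * B := mul_le_mul_of_nonneg_right e1 hBnn
    simp only [hvdef] at hvp
    rw [hC, le_div_iff₀ hε]
    nlinarith
  set A : Set (ℝ × (Fin 3 → ℝ)) :=
    (Prod.fst ⁻¹' (Set.Icc 0 T)) ∩ {p | v (t₀,x₀) ≤ v p} with hAdef
  have hp0A : (t₀,x₀) ∈ A := ⟨ht₀, Set.mem_setOf_eq ▸ le_refl _⟩
  have hAclosed : IsClosed A :=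
    (isClosed_Icc.preimage continuous_fst).inter (isClosed_le continuous_const hvc)
  have hAbd : Bornology.IsBounded A := by
    apply Bornology.IsBounded.subset (Metric.isBounded_closedBall
      (x := (0 : ℝ × (Fin 3 → ℝ))) (r := max T (Real.sqrt (max C 0))))
    intro p hpA
    have hp1 : p.1 ∈ Set.Icc 0 T := hpA.1
    have hvp : 0 < v p := lt_of_lt_of_le hv0 hpA.2
    have hsum := hCb p hp1 hvp
    rw [Metric.mem_closedBall, dist_zero_right]
    rw [Prod.norm_def]
    apply max_le
    · refine le_trans ?_ (le_max_left _ _)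
      rw [Real.norm_eq_abs, abs_of_nonneg hp1.1]
      exact hp1.2
    · refine le_trans ?_ (le_max_right _ _)
      rw [pi_norm_le_iff_of_nonneg (Real.sqrt_nonneg _)]
      intro i
      rw [Real.norm_eq_abs, ← Real.sqrt_sq_eq_abs]
      apply Real.sqrt_le_sqrt
      calc (p.2 i)^2 ≤ ∑ j, (p.2 j)^2 :=
            Finset.single_le_sum (fun j _ => sq_nonneg (p.2 j)) (Finset.mem_univ i)
        _ ≤ C := hsum
        _ ≤ max C 0 := le_max_left _ _
  have hAcomp : IsCompact A := Metric.isCompact_of_isClosed_isBounded hAclosed hAbd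
  obtain ⟨q, hqA, hqmax⟩ := hAcomp.exists_isMaxOn ⟨(t₀,x₀), hp0A⟩ hvc.continuousOn
  have hvq0 : v (t₀,x₀) ≤ v q := hqmax hp0A
  have hglob : ∀ s ∈ Set.Icc 0 T, ∀ y, v (s,y) ≤ v q := by
    intro s hs y
    by_cases hmem : (s,y) ∈ A
    · exact hqmax hmem
    · have : ¬ (v (t₀,x₀) ≤ v (s,y)) := fun hle => hmem ⟨hs, hle⟩
      push_neg at this
      linarith
  obtain ⟨t₁, x₁⟩ := q
  have ht₁ : t₁ ∈ Set.Icc 0 T := hqA.1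
  have hvq : 0 < v (t₁, x₁) := lt_of_lt_of_le hv0 hvq0
  have ht₁pos : 0 < t₁ := by
    rcases lt_or_eq_of_le ht₁.1 with h | h
    · exact h
    · exfalso
      simp only [hvdef, ← h, hinit x₁] at hvq
      have : (0:ℝ) < 1 + ∑ i, (x₁ i)^2 := by positivity
      nlinarith
  -- slice smoothness
  have hWx : ContDiff ℝ (⊤ : ℕ∞) (fun y => W t₁ y) := hW.comp (contDiff_const.prodMk contDiff_id)
  have hWxd : Differentiable ℝ (fun y => W t₁ y) := hWx.differentiable (by simp)
  have hWt : ContDiff ℝ (⊤ : ℕ∞) (fun s => W s x₁) := hW.comp (contDiff_id.prodMk contDiff_const)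
  set E : ℝ := Real.exp (-lam*t₁) with hEdef
  have hE : 0 < E := Real.exp_pos _
  set F : (Fin 3 → ℝ) → ℝ := fun y => E * W t₁ y - ε * (1 + ∑ j, (y j)^2) with hFdef
  have hFeq : ∀ y, F y = v (t₁, y) := fun y => rfl
  have hF : ContDiff ℝ (⊤ : ℕ∞) F :=
    (contDiff_const.mul hWx).sub (contDiff_const.mul (contDiff_const.add sumsq_contDiff))
  have hFmax : ∀ y, F y ≤ F x₁ := by
    intro y
    rw [hFeq, hFeq]
    exact hglob t₁ ht₁ y
  -- first order conditions
  have hgrad0 : ∀ i, pd i F x₁ = 0 := by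
    intro i
    have hloc : IsLocalMax F x₁ := Filter.Eventually.of_forall hFmax
    unfold pd
    rw [hloc.fderiv_eq_zero]
    rfl
  -- second order conditions
  have hsec0 : ∀ i, pd i (pd i F) x₁ ≤ 0 := by
    intro i
    set g : ℝ → ℝ := fun τ => F (x₁ + τ • (Pi.single i 1 : Fin 3 → ℝ)) with hgdef
    have hgC : ContDiff ℝ (⊤ : ℕ∞) g := hF.comp (line_contDiff x₁ _)
    have hgd : Differentiable ℝ g := hgC.differentiable (by simp)
    have hderiv_g : deriv g = fun τ => pd i F (x₁ + τ • (Pi.single i 1 : Fin 3 → ℝ)) :=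
      deriv_line hF x₁ _
    have hg2 : Differentiable ℝ (deriv g) := by
      rw [hderiv_g]
      exact ((pd_contDiff i hF).comp (line_contDiff x₁ _)).differentiable (by simp)
    have hgmax : ∀ s, g s ≤ g 0 := by
      intro s
      have h0 : x₁ + (0:ℝ) • (Pi.single i 1 : Fin 3 → ℝ) = x₁ := by simp
      simp only [hgdef, h0]
      exact hFmax _
    have hle := second_deriv_nonpos_of_max g hgd hg2 hgC.continuous hgmax
    rwa [second_deriv_line hF x₁ i] at hle
  -- unpack pd of F
  have hsq_diff : ∀ y, DifferentiableAt ℝ (fun z : Fin 3 → ℝ => ε * (1 + ∑ j, (z j)^2)) y :=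
    fun y => (((contDiff_const.add sumsq_contDiff).differentiable (by simp)) y).const_mul ε
  have hpdF : ∀ (i : Fin 3) (y : Fin 3 → ℝ),
      pd i F y = E * pd i (fun z => W t₁ z) y - ε * (2 * y i) := by
    intro i y
    rw [hFdef]
    rw [pd_sub ((hWxd y).const_mul E) (hsq_diff y)]
    rw [pd_const_mul E (hWxd y), pd_const_mul ε ((contDiff_const.add sumsq_contDiff).differentiable (by simp) y)]
    rw [pd_const_add, pd_coord_sq_sum]
  have h2 : ∀ i, E * pd i (fun y => W t₁ y) x₁ = ε * (2 * x₁ i) := by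
    intro i
    have h := hgrad0 i
    rw [hpdF i x₁] at h
    linarith
  have h3 : ∀ i, E * pd i (fun y => pd i (fun z => W t₁ z) y) x₁ ≤ 2 * ε := by
    intro i
    have hle := hsec0 i
    have hfun : pd i F = fun y => E * pd i (fun z => W t₁ z) y - ε * (2 * y i) :=
      funext (hpdF i)
    rw [hfun] at hle
    have hc2 : (fun y : Fin 3 → ℝ => ε * (2 * y i)) = fun y : Fin 3 → ℝ => (ε * 2) * y i := by
      funext y; ring
    have hpdiff : DifferentiableAt ℝ (fun y => pd i (fun z => W t₁ z) y) x₁ :=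
      ((pd_contDiff i hWx).differentiable (by simp)) x₁
    rw [pd_sub (hpdiff.const_mul E) (by rw [hc2]; exact (diff_coord i x₁).const_mul _),
        pd_const_mul E hpdiff, hc2, pd_const_mul (ε*2) (diff_coord i x₁), pd_coord] at hle
    norm_num at hle
    linarith
  -- time derivative inequality
  have hexp : HasDerivAt (fun s : ℝ => Real.exp (-lam*s)) (-lam * E) t₁ := by
    have hid : HasDerivAt (fun s : ℝ => -lam * s) (-lam * 1) t₁ := (hasDerivAt_id t₁).const_mul (-lam)
    have hcomp := hid.exp
    simpa [hEdef, mul_comm] using hcomp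
  have hWtd : HasDerivAt (fun s => W s x₁) (deriv (fun s => W s x₁) t₁) t₁ :=
    ((hWt.differentiable (by simp)) t₁).hasDerivAt
  have hprod : HasDerivAt (fun s => Real.exp (-lam*s) * W s x₁)
      (-lam * E * W t₁ x₁ + E * deriv (fun s => W s x₁) t₁) t₁ := by
    have := hexp.fun_mul hWtd
    simpa [hEdef] using this
  have htmax : ∀ s ∈ Set.Icc (0:ℝ) t₁,
      (fun s => Real.exp (-lam*s) * W s x₁) s ≤ (fun s => Real.exp (-lam*s) * W s x₁) t₁ := by
    intro s hs
    have hsT : s ∈ Set.Icc 0 T := ⟨hs.1, le_trans hs.2 ht₁.2⟩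
    have := hglob s hsT x₁
    simp only [hvdef] at this
    simp only [hEdef]
    linarith
  have hd0 : 0 ≤ deriv (fun s => Real.exp (-lam*s) * W s x₁) t₁ :=
    deriv_nonneg_of_max _ t₁ ht₁pos hprod.differentiableAt htmax
  rw [hprod.deriv] at hd0
  have h1 : lam * W t₁ x₁ ≤ deriv (fun s => W s x₁) t₁ := by nlinarith
  -- positivity facts
  have hvq' : ε * (1 + ∑ i, (x₁ i)^2) < E * W t₁ x₁ := by
    have h := hvq
    simp only [hvdef] at h
    rw [hEdef]
    linarith
  have hSnn : (0:ℝ) ≤ ∑ i, (x₁ i)^2 := Finset.sum_nonneg fun i _ => sq_nonneg _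
  have hWqpos : 0 < W t₁ x₁ := by
    have h0 : 0 < E * W t₁ x₁ := lt_trans (by positivity) hvq'
    by_contra hng
    push_neg at hng
    nlinarith
  -- PDE
  have hpq := hpde t₁ ht₁ x₁
  have e1 : (∑ i : Fin 3, u t₁ x₁ i * (E * pd i (fun y => W t₁ y) x₁))
      = E * ∑ i : Fin 3, u t₁ x₁ i * pd i (fun y => W t₁ y) x₁ := by
    rw [Finset.mul_sum]
    exact Finset.sum_congr rfl (fun i _ => by ring)
  have e2 : (∑ i : Fin 3, E * pd i (fun y => pd i (fun z => W t₁ z) y) x₁)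
      = E * ∑ i : Fin 3, pd i (fun y => pd i (fun z => W t₁ z) y) x₁ :=
    (Finset.mul_sum _ _ _).symm
  have hpqE : E * deriv (fun s => W s x₁) t₁
      + (∑ i : Fin 3, u t₁ x₁ i * (E * pd i (fun y => W t₁ y) x₁))
      - (∑ i : Fin 3, E * pd i (fun y => pd i (fun z => W t₁ z) y) x₁)
      = E * (c t₁ x₁ * W t₁ x₁) := by
    rw [e1, e2, ← mul_add, ← mul_sub, hpq]
  -- sum bounds
  have hsum3 : (∑ i : Fin 3, E * pd i (fun y => pd i (fun z => W t₁ z) y) x₁) ≤ 6 * ε := by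
    calc (∑ i : Fin 3, E * pd i (fun y => pd i (fun z => W t₁ z) y) x₁)
        ≤ ∑ _i : Fin 3, 2 * ε := Finset.sum_le_sum (fun i _ => h3 i)
      _ = 6 * ε := by simp [Finset.sum_const]; ring
  have hsum2 : -(ε * M' * (3 + ∑ i, (x₁ i)^2))
      ≤ ∑ i : Fin 3, u t₁ x₁ i * (E * pd i (fun y => W t₁ y) x₁) := by
    have hper : ∀ i ∈ Finset.univ, -(ε * (M' * (1 + (x₁ i)^2)))
        ≤ u t₁ x₁ i * (E * pd i (fun y => W t₁ y) x₁) := by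
      intro i _
      rw [h2 i]
      have hui := hubd t₁ x₁ i
      have habs2 : |2 * x₁ i| ≤ 1 + (x₁ i)^2 := by
        rw [abs_mul]
        have := sq_nonneg (|x₁ i| - 1)
        have := sq_abs (x₁ i)
        have := abs_nonneg (x₁ i)
        nlinarith [abs_of_nonneg (show (0:ℝ) ≤ 2 by norm_num)]
      have habs : |u t₁ x₁ i * (2 * x₁ i)| ≤ M' * (1 + (x₁ i)^2) := by
        rw [abs_mul]
        calc |u t₁ x₁ i| * |2 * x₁ i| ≤ M' * |2 * x₁ i| :=
              mul_le_mul_of_nonneg_right hui (abs_nonneg _)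
          _ ≤ M' * (1 + (x₁ i)^2) := mul_le_mul_of_nonneg_left habs2 hM'
      have hlow : -(M' * (1 + (x₁ i)^2)) ≤ u t₁ x₁ i * (2 * x₁ i) :=
        le_trans (neg_le_neg habs) (neg_abs_le _)
      have := mul_le_mul_of_nonneg_left hlow hε.le
      nlinarith
    have hsum := Finset.sum_le_sum hper
    have hconst : (∑ i : Fin 3, -(ε * (M' * (1 + (x₁ i)^2))))
        = -(ε * M' * (3 + ∑ i, (x₁ i)^2)) := by
      simp [Fin.sum_univ_three]
      ring
    linarith [hconst ▸ hsum]
  -- final contradiction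
  have hKe : E * (c t₁ x₁ * W t₁ x₁) ≤ E * (K * W t₁ x₁) :=
    mul_le_mul_of_nonneg_left (mul_le_mul_of_nonneg_right (hc t₁ x₁) hWqpos.le) hE.le
  have hED : E * (lam * W t₁ x₁) ≤ E * deriv (fun s => W s x₁) t₁ :=
    mul_le_mul_of_nonneg_left h1 hE.le
  have hM2 : M' * (ε * (1 + ∑ i, (x₁ i)^2)) ≤ M' * (E * W t₁ x₁) :=
    mul_le_mul_of_nonneg_left hvq'.le hM'
  rw [hlam] at hED
  nlinarith [hvq', hE, hWqpos, hSnn, hε.le, hM2, hpqE, hsum2, hsum3, hKe, hED,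
    mul_nonneg (mul_nonneg hε.le hM') hSnn, mul_nonneg hε.le hSnn]

lemma pd_W (f : Fin 3 → (Fin 3 → ℝ) → ℝ) (hf : ∀ k, ContDiff ℝ (⊤ : ℕ∞) (f k))
    (i : Fin 3) (x : Fin 3 → ℝ) :
    pd i (fun y => (∑ k, f k y ^ 2) - 1) x = ∑ k, 2 * f k x * pd i (f k) x := by
  rw [pd_sub_const, pd_sum (fun k y => f k y ^ 2)
    (fun k => ((hf k).differentiable (by simp) x).pow 2)]
  exact Finset.sum_congr rfl fun k _ => by
    rw [pd_sq ((hf k).differentiable (by simp) x)]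

lemma pdpd_W (f : Fin 3 → (Fin 3 → ℝ) → ℝ) (hf : ∀ k, ContDiff ℝ (⊤ : ℕ∞) (f k))
    (i : Fin 3) (x : Fin 3 → ℝ) :
    pd i (fun y => pd i (fun z => (∑ k, f k z ^ 2) - 1) y) x
      = ∑ k, (2 * (pd i (f k) x)^2 + 2 * f k x * pd i (pd i (f k)) x) := by
  have hfun : (fun y => pd i (fun z => (∑ k, f k z ^ 2) - 1) y)
      = fun y => ∑ k, 2 * f k y * pd i (f k) y := funext fun y => pd_W f hf i y
  rw [hfun, pd_sum (fun k y => 2 * f k y * pd i (f k) y) (fun k =>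
    ((((hf k).differentiable (by simp) x).const_mul 2).mul
      (((pd_contDiff i (hf k)).differentiable (by simp)) x)))]
  refine Finset.sum_congr rfl fun k _ => ?_
  have h1 : (fun y => 2 * f k y * pd i (f k) y) = fun y => 2 * (f k y * pd i (f k) y) := by
    funext y; ring
  rw [h1, pd_const_mul (f := fun y => f k y * pd i (f k) y) 2 (((hf k).differentiable (by simp) x).mul
      (((pd_contDiff i (hf k)).differentiable (by simp)) x)),
    pd_mul ((hf k).differentiable (by simp) x) (((pd_contDiff i (hf k)).differentiable (by simp)) x)]
  ring

lemma deriv_W (g : Fin 3 → ℝ → ℝ) (hg : ∀ k, Differentiable ℝ (g k)) (t : ℝ) :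
    deriv (fun s => (∑ k, g k s ^ 2) - 1) t = ∑ k, 2 * g k t * deriv (g k) t := by
  have h : HasDerivAt (fun s => (∑ k, g k s ^ 2) - 1)
      (∑ k, 2 * g k t ^ 1 * deriv (g k) t) t := by
    apply HasDerivAt.sub_const
    exact HasDerivAt.fun_sum fun k _ => ((hg k t).hasDerivAt.pow 2).congr_deriv (by norm_num)
  rw [h.deriv]
  exact Finset.sum_congr rfl fun k _ => by ring

/-- If `d` is a smooth, bounded (with bounded derivative) solution of
`∂_t d + u·∇d − Δd = |∇d|² d` on `[0,T] × ℝ³` with `|d(0,·)| ≡ 1`,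
then `|d(t,·)| ≡ 1` for all `t ∈ [0,T]`. -/
theorem stmt4 (T : ℝ) (hT : 0 ≤ T)
    (d : ℝ → (Fin 3 → ℝ) → (Fin 3 → ℝ)) (u : ℝ → (Fin 3 → ℝ) → (Fin 3 → ℝ))
    (hd : ContDiff ℝ (⊤ : ℕ∞) (fun p : ℝ × (Fin 3 → ℝ) => d p.1 p.2))
    (hu : ContDiff ℝ (⊤ : ℕ∞) (fun p : ℝ × (Fin 3 → ℝ) => u p.1 p.2))
    (hubd : ∃ M : ℝ, ∀ t x, ‖u t x‖ ≤ M)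
    (hdbd : ∃ M : ℝ, ∀ t x, ‖d t x‖ ≤ M ∧
        ‖fderiv ℝ (fun p : ℝ × (Fin 3 → ℝ) => d p.1 p.2) (t, x)‖ ≤ M)
    (hpde : ∀ t ∈ Set.Icc 0 T, ∀ (x : Fin 3 → ℝ) (k : Fin 3),
        deriv (fun s => d s x k) t
          + (∑ i : Fin 3, u t x i * pd i (fun y => d t y k) x)
          - (∑ i : Fin 3, pd i (fun y => pd i (fun z => d t z k) y) x)
        = (∑ i : Fin 3, ∑ m : Fin 3, (pd i (fun y => d t y m) x) ^ 2) * d t x k)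
    (hinit : ∀ x, (∑ k : Fin 3, (d 0 x k) ^ 2) = 1) :
    ∀ t ∈ Set.Icc 0 T, ∀ x, (∑ k : Fin 3, (d t x k) ^ 2) = 1 := by
  obtain ⟨M₀, hubd⟩ := hubd
  obtain ⟨M, hdbd⟩ := hdbd
  have hM : 0 ≤ M := le_trans (norm_nonneg _) (hdbd 0 (fun _ => 0)).1
  have hM₀ : 0 ≤ M₀ := le_trans (norm_nonneg _) (hubd 0 (fun _ => 0))
  have hubd' : ∀ t x i, |u t x i| ≤ M₀ := fun t x i =>
    le_trans (norm_le_pi_norm (u t x) i) (hubd t x)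
  have hdbd' : ∀ t x k, |d t x k| ≤ M := fun t x k =>
    le_trans (norm_le_pi_norm (d t x) k) (hdbd t x).1
  have hdk : ∀ k : Fin 3, ContDiff ℝ (⊤ : ℕ∞) (fun p : ℝ × (Fin 3 → ℝ) => d p.1 p.2 k) := fun k =>
    (ContinuousLinearMap.proj k : ((Fin 3 → ℝ) →L[ℝ] ℝ)).contDiff.comp hd
  have hslicex : ∀ (t : ℝ) (k : Fin 3), ContDiff ℝ (⊤ : ℕ∞) (fun y => d t y k) := fun t k =>
    (hdk k).comp (contDiff_const.prodMk contDiff_id)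
  have hslicet : ∀ (x : Fin 3 → ℝ) (k : Fin 3), Differentiable ℝ (fun s => d s x k) :=
    fun x k => ((hdk k).comp (contDiff_id.prodMk contDiff_const)).differentiable (by simp)
  -- bound on pd of d
  have hPbd : ∀ (t : ℝ) (x : Fin 3 → ℝ) (i m : Fin 3), |pd i (fun y => d t y m) x| ≤ M := by
    intro t x i m
    have hjd : DifferentiableAt ℝ (fun p : ℝ × (Fin 3 → ℝ) => d p.1 p.2) (t, x) :=
      (hd.differentiable (by simp)) (t, x)
    set D := fderiv ℝ (fun p : ℝ × (Fin 3 → ℝ) => d p.1 p.2) (t, x) with hD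
    set J : ((Fin 3 → ℝ) →L[ℝ] ℝ × (Fin 3 → ℝ)) :=
      (0 : ((Fin 3 → ℝ) →L[ℝ] ℝ)).prod (ContinuousLinearMap.id ℝ (Fin 3 → ℝ)) with hJ
    have hι : HasFDerivAt (fun y : Fin 3 → ℝ => ((t, y) : ℝ × (Fin 3 → ℝ))) J x :=
      (hasFDerivAt_const t x).prodMk (hasFDerivAt_id x)
    have hcomp : HasFDerivAt (fun y => d t y) (D.comp J) x :=
      hjd.hasFDerivAt.comp x hι
    have hm : HasFDerivAt (fun y => d t y m)
        ((ContinuousLinearMap.proj m : ((Fin 3 → ℝ) →L[ℝ] ℝ)).comp (D.comp J)) x :=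
      (ContinuousLinearMap.proj m : ((Fin 3 → ℝ) →L[ℝ] ℝ)).hasFDerivAt.comp x hcomp
    have : pd i (fun y => d t y m) x = D ((0:ℝ), (Pi.single i 1 : Fin 3 → ℝ)) m := by
      rw [pd, hm.fderiv]
      simp [hJ]
    rw [this]
    have h3 : |D ((0:ℝ), (Pi.single i 1 : Fin 3 → ℝ)) m|
        ≤ ‖D ((0:ℝ), (Pi.single i 1 : Fin 3 → ℝ))‖ :=
      norm_le_pi_norm (D ((0:ℝ), (Pi.single i 1 : Fin 3 → ℝ))) m
    have h1 : ‖D ((0:ℝ), (Pi.single i 1 : Fin 3 → ℝ))‖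
        ≤ ‖D‖ * ‖(((0:ℝ), (Pi.single i 1 : Fin 3 → ℝ)) : ℝ × (Fin 3 → ℝ))‖ := D.le_opNorm _
    have h2 : ‖(((0:ℝ), (Pi.single i 1 : Fin 3 → ℝ)) : ℝ × (Fin 3 → ℝ))‖ ≤ 1 := by
      rw [Prod.norm_def]
      apply max_le
      · simp
      · rw [pi_norm_le_iff_of_nonneg zero_le_one]
        intro j
        rcases eq_or_ne j i with h | h
        · simp [h, Pi.single_apply]
        · simp [Pi.single_apply, h]
    have hDM : ‖D‖ ≤ M := (hdbd t x).2
    calc |D ((0:ℝ), (Pi.single i 1 : Fin 3 → ℝ)) m|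
        ≤ ‖D‖ * ‖(((0:ℝ), (Pi.single i 1 : Fin 3 → ℝ)) : ℝ × (Fin 3 → ℝ))‖ := le_trans h3 h1
      _ ≤ M * 1 := mul_le_mul hDM h2 (norm_nonneg _) hM
      _ = M := mul_one M
  -- smoothness of W
  have hWsm : ContDiff ℝ (⊤ : ℕ∞) (fun p : ℝ × (Fin 3 → ℝ) => (∑ k : Fin 3, d p.1 p.2 k ^ 2) - 1) :=
    (ContDiff.sum fun k _ => (hdk k).pow 2).sub contDiff_const
  -- bound on W
  have hsum_bd : ∀ t x, (∑ k : Fin 3, d t x k ^ 2) ≤ 3 * M ^ 2 := by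
    intro t x
    have hk : ∀ k, d t x k ^ 2 ≤ M ^ 2 := fun k =>
      sq_le_sq' (neg_le_of_abs_le (hdbd' t x k)) (le_of_abs_le (hdbd' t x k))
    calc (∑ k : Fin 3, d t x k ^ 2) ≤ ∑ _k : Fin 3, M ^ 2 :=
          Finset.sum_le_sum fun k _ => hk k
      _ = 3 * M ^ 2 := by simp [Finset.sum_const, Finset.card_univ, smul_eq_mul]; try ring
  have hsum_nn : ∀ t x, (0:ℝ) ≤ ∑ k : Fin 3, d t x k ^ 2 := fun t x =>
    Finset.sum_nonneg fun k _ => sq_nonneg _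
  have hWbd : ∀ t x, |(∑ k : Fin 3, d t x k ^ 2) - 1| ≤ 3 * M ^ 2 + 1 := by
    intro t x
    rw [abs_le]
    constructor
    · nlinarith [hsum_nn t x, sq_nonneg M]
    · linarith [hsum_bd t x]
  -- bound on c
  have hcbd : ∀ t x, (2 * ∑ i : Fin 3, ∑ m : Fin 3, (pd i (fun y => d t y m) x) ^ 2)
      ≤ 18 * M ^ 2 := by
    intro t x
    have hP2 : ∀ i m : Fin 3, pd i (fun y => d t y m) x ^ 2 ≤ M ^ 2 := fun i m =>
      sq_le_sq' (neg_le_of_abs_le (hPbd t x i m)) (le_of_abs_le (hPbd t x i m))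
    have : (∑ i : Fin 3, ∑ m : Fin 3, (pd i (fun y => d t y m) x) ^ 2)
        ≤ ∑ _i : Fin 3, ∑ _m : Fin 3, M ^ 2 :=
      Finset.sum_le_sum fun i _ => Finset.sum_le_sum fun m _ => hP2 i m
    have h9 : (∑ _i : Fin 3, ∑ _m : Fin 3, (M:ℝ) ^ 2) = 9 * M ^ 2 := by
      simp [Finset.sum_const, Finset.card_univ, smul_eq_mul]; try ring
    linarith [h9 ▸ this]
  -- PDE for W
  have hWpde : ∀ t ∈ Set.Icc 0 T, ∀ x : Fin 3 → ℝ,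
      deriv (fun s => (∑ k : Fin 3, d s x k ^ 2) - 1) t
        + (∑ i : Fin 3, u t x i * pd i (fun y => (∑ k : Fin 3, d t y k ^ 2) - 1) x)
        - (∑ i : Fin 3, pd i (fun y => pd i (fun z => (∑ k : Fin 3, d t z k ^ 2) - 1) y) x)
      = (2 * ∑ i : Fin 3, ∑ m : Fin 3, (pd i (fun y => d t y m) x) ^ 2)
        * ((∑ k : Fin 3, d t x k ^ 2) - 1) := by
    intro t ht x
    rw [deriv_W (fun k s => d s x k) (fun k => hslicet x k) t]
    simp only [pdpd_W (fun k y => d t y k) (fun k => hslicex t k)]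
    simp only [pd_W (fun k y => d t y k) (fun k => hslicex t k)]
    have h0 := hpde t ht x 0
    have h1 := hpde t ht x 1
    have h2 := hpde t ht x 2
    simp only [Fin.sum_univ_three] at h0 h1 h2 ⊢
    set_option maxHeartbeats 1000000 in
    linear_combination (2 * d t x 0) * h0 + (2 * d t x 1) * h1 + (2 * d t x 2) * h2
  -- initial condition for W
  have hWinit : ∀ x : Fin 3 → ℝ, (∑ k : Fin 3, d 0 x k ^ 2) - 1 = 0 := fun x => by
    rw [hinit x]; ring
  -- first application: W ≤ 0
  have happ1 : ∀ t ∈ Set.Icc 0 T, ∀ x, (∑ k : Fin 3, d t x k ^ 2) - 1 ≤ 0 :=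
    maxprin T hT u M₀ hM₀ hubd' (fun t x => (∑ k : Fin 3, d t x k ^ 2) - 1) hWsm
      (3 * M ^ 2 + 1) hWbd
      (fun t x => 2 * ∑ i : Fin 3, ∑ m : Fin 3, (pd i (fun y => d t y m) x) ^ 2)
      (18 * M ^ 2) hcbd hWpde hWinit
  -- second application: -W ≤ 0
  have hnegfun : ∀ (t : ℝ) (i : Fin 3),
      (fun y => pd i (fun z => -((∑ k : Fin 3, d t z k ^ 2) - 1)) y)
        = fun y => -(pd i (fun z => (∑ k : Fin 3, d t z k ^ 2) - 1) y) := by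
    intro t i
    funext y
    exact pd_neg
  have hW2pde : ∀ t ∈ Set.Icc 0 T, ∀ x : Fin 3 → ℝ,
      deriv (fun s => -((∑ k : Fin 3, d s x k ^ 2) - 1)) t
        + (∑ i : Fin 3, u t x i * pd i (fun y => -((∑ k : Fin 3, d t y k ^ 2) - 1)) x)
        - (∑ i : Fin 3, pd i (fun y => pd i (fun z => -((∑ k : Fin 3, d t z k ^ 2) - 1)) y) x)
      = (2 * ∑ i : Fin 3, ∑ m : Fin 3, (pd i (fun y => d t y m) x) ^ 2)
        * (-((∑ k : Fin 3, d t x k ^ 2) - 1)) := by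
    intro t ht x
    have hkey := hWpde t ht x
    rw [deriv.fun_neg]
    simp only [hnegfun t, pd_neg]
    simp only [mul_neg, Finset.sum_neg_distrib]
    linarith [hkey]
  have hW2sm : ContDiff ℝ (⊤ : ℕ∞) (fun p : ℝ × (Fin 3 → ℝ) => -((∑ k : Fin 3, d p.1 p.2 k ^ 2) - 1)) :=
    hWsm.neg
  have hW2bd : ∀ t x, |-((∑ k : Fin 3, d t x k ^ 2) - 1)| ≤ 3 * M ^ 2 + 1 := by
    intro t x
    rw [abs_neg]
    exact hWbd t x
  have hW2init : ∀ x : Fin 3 → ℝ, -((∑ k : Fin 3, d 0 x k ^ 2) - 1) = 0 := fun x => by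
    rw [hinit x]; ring
  have happ2 : ∀ t ∈ Set.Icc 0 T, ∀ x, -((∑ k : Fin 3, d t x k ^ 2) - 1) ≤ 0 :=
    maxprin T hT u M₀ hM₀ hubd' (fun t x => -((∑ k : Fin 3, d t x k ^ 2) - 1)) hW2sm
      (3 * M ^ 2 + 1) hW2bd
      (fun t x => 2 * ∑ i : Fin 3, ∑ m : Fin 3, (pd i (fun y => d t y m) x) ^ 2)
      (18 * M ^ 2) hcbd hW2pde hW2init
  intro t ht x
  have ha := happ1 t ht x
  have hb := happ2 t ht x
  linarith
end

section
/- Let g : [0,T] → [0,∞) be C¹, F : [0,T] → [0,∞) continuous, and c ≥ 0 a constant, and suppose (1/2)(g²)'(t) + c·g(t)² ≤ g(t)·F(t) for all t ∈ [0,T]. Then g(t) + c∫₀ᵗ g(s) ds ≤ g(0) + ∫₀ᵗ F(s) ds for all t ∈ [0,T]. -/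
/-!
Divide the inequality by the never-vanishing `χ = √(g² + δ²)`: since `χ χ' = g g'` and `g ≤ χ`,
it becomes `χ' ≤ F - c g² / χ`. Integrate, and compare back using `g ≤ χ ≤ g + δ` (where `g ≥ 0`)
and `g - δ ≤ g² / χ`; this proves the estimate up to an error `δ (1 + c t)`, and `δ → 0`.
-/

open Set Filter Topology intervalIntegral

namespace Real

theorem le_sqrt_sq_add_sq (x y : ℝ) : x ≤ √(x ^ 2 + y ^ 2) :=
  (le_abs_self x).trans (abs_le_sqrt (by nlinarith))

theorem sqrt_sq_add_sq_pos (x : ℝ) {δ : ℝ} (hδ : δ ≠ 0) : 0 < √(x ^ 2 + δ ^ 2) :=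
  sqrt_pos.2 (by positivity)

theorem sqrt_sq_add_sq_le_add {x δ : ℝ} (hx : 0 ≤ x) (hδ : 0 ≤ δ) : √(x ^ 2 + δ ^ 2) ≤ x + δ :=
  (sqrt_le_left (by positivity)).2 (by nlinarith)

theorem sub_le_sq_div_sqrt_sq_add_sq (x : ℝ) {δ : ℝ} (hδ : 0 < δ) :
    x - δ ≤ x ^ 2 / √(x ^ 2 + δ ^ 2) := by
  have hχ := sqrt_sq_add_sq_pos x hδ.ne'
  rcases le_or_gt x δ with hxδ | hδx
  · exact (sub_nonpos.2 hxδ).trans (by positivity)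
  · rw [le_div_iff₀ hχ]
    have := sqrt_sq_add_sq_le_add (hδ.trans hδx).le hδ.le
    nlinarith

theorem le_of_forall_pos_le_add_mul {a b K : ℝ} (h : ∀ δ > 0, a ≤ b + δ * K) : a ≤ b := by
  have hlim : Tendsto (fun δ => b + δ * K) (𝓝[>] 0) (𝓝 b) := by
    have : Continuous (fun δ : ℝ => b + δ * K) := by fun_prop
    simpa using (this.tendsto 0).mono_left nhdsWithin_le_nhds
  exact ge_of_tendsto hlim (eventually_nhdsWithin_of_forall h)

end Real

theorem HasDerivAt.sqrt_sq_add_sq {f : ℝ → ℝ} {f' x δ : ℝ} (hf : HasDerivAt f f' x) (hδ : δ ≠ 0) :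
    HasDerivAt (fun s => √(f s ^ 2 + δ ^ 2)) (f x * f' / √(f x ^ 2 + δ ^ 2)) x := by
  have hpos : 0 < f x ^ 2 + δ ^ 2 := by positivity
  convert ((hf.fun_pow 2).add_const (δ ^ 2)).sqrt hpos.ne' using 1
  field_simp
  ring

section
variable {g F : ℝ → ℝ} {a b c : ℝ}

theorem sqrt_sq_add_sq_sub_le_integral {δ : ℝ} (hab : a ≤ b) (hδ : 0 < δ)
    (hgc : ContinuousOn g (Icc a b)) (hgd : ∀ x ∈ Ioo a b, DifferentiableAt ℝ g x)
    (hF : ContinuousOn F (Icc a b)) (hFpos : ∀ x ∈ Ioo a b, 0 ≤ F x)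
    (hineq : ∀ x ∈ Ioo a b, g x * deriv g x + c * g x ^ 2 ≤ g x * F x) :
    √(g b ^ 2 + δ ^ 2) - √(g a ^ 2 + δ ^ 2) ≤
      ∫ x in a..b, (F x - c * (g x ^ 2 / √(g x ^ 2 + δ ^ 2))) := by
  set χ : ℝ → ℝ := fun x => √(g x ^ 2 + δ ^ 2)
  have hχpos : ∀ x, 0 < χ x := fun x => Real.sqrt_sq_add_sq_pos _ hδ.ne'
  have hχc : ContinuousOn χ (Icc a b) := (hgc.pow 2).add continuousOn_const |>.sqrt
  have hφ : ContinuousOn (fun x => F x - c * (g x ^ 2 / χ x)) (Icc a b) :=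
    hF.sub (continuousOn_const.mul ((hgc.pow 2).div hχc fun x _ => (hχpos x).ne'))
  refine sub_le_integral_of_hasDeriv_right_of_le hab hχc
    (fun x hx => ((hgd x hx).hasDerivAt.sqrt_sq_add_sq hδ.ne').hasDerivWithinAt)
    hφ.integrableOn_Icc fun x hx => ?_
  have hgF : g x * F x ≤ χ x * F x :=
    mul_le_mul_of_nonneg_right (Real.le_sqrt_sq_add_sq _ _) (hFpos x hx)
  have hmul : (F x - c * (g x ^ 2 / χ x)) * χ x = χ x * F x - c * g x ^ 2 := by
    field_simp [(hχpos x).ne']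
  change g x * deriv g x / χ x ≤ F x - c * (g x ^ 2 / χ x)
  rw [div_le_iff₀ (hχpos x), hmul]
  linarith [hineq x hx]

theorem add_mul_integral_le_add_integral_of_mul_deriv_le (hab : a ≤ b) (hc : 0 ≤ c)
    (hgc : ContinuousOn g (Icc a b)) (hgd : ∀ x ∈ Ioo a b, DifferentiableAt ℝ g x)
    (hF : ContinuousOn F (Icc a b)) (hga : 0 ≤ g a) (hFpos : ∀ x ∈ Ioo a b, 0 ≤ F x)
    (hineq : ∀ x ∈ Ioo a b, g x * deriv g x + c * g x ^ 2 ≤ g x * F x) :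
    g b + c * ∫ x in a..b, g x ≤ g a + ∫ x in a..b, F x := by
  refine Real.le_of_forall_pos_le_add_mul (K := 1 + c * (b - a)) fun δ (hδ : 0 < δ) => ?_
  set χ : ℝ → ℝ := fun x => √(g x ^ 2 + δ ^ 2)
  have hq : IntervalIntegrable (fun x => g x ^ 2 / χ x) MeasureTheory.volume a b :=
    ((hgc.pow 2).div ((hgc.pow 2).add continuousOn_const).sqrt
      fun x _ => (Real.sqrt_sq_add_sq_pos _ hδ.ne').ne').intervalIntegrable_of_Icc hab
  have hg : IntervalIntegrable g MeasureTheory.volume a b := hgc.intervalIntegrable_of_Icc hab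
  have hχ := sqrt_sq_add_sq_sub_le_integral hab hδ hgc hgd hF hFpos hineq
  rw [integral_sub (hF.intervalIntegrable_of_Icc hab) (hq.const_mul c), integral_const_mul] at hχ
  have hlower : ∫ x in a..b, (g x - δ) ≤ ∫ x in a..b, g x ^ 2 / χ x :=
    integral_mono_on hab (hg.sub intervalIntegrable_const) hq
      fun x _ => Real.sub_le_sq_div_sqrt_sq_add_sq (g x) hδ
  rw [integral_sub hg intervalIntegrable_const, integral_const, smul_eq_mul] at hlower
  have hb : g b ≤ χ b := Real.le_sqrt_sq_add_sq _ _
  have ha : χ a ≤ g a + δ := Real.sqrt_sq_add_sq_le_add hga hδ.le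
  nlinarith [mul_le_mul_of_nonneg_left hlower hc]

end

theorem stmt6_general (T c : ℝ) (hc : 0 ≤ c)
    (g F : ℝ → ℝ) (hg : ContDiff ℝ 1 g) (hF : Continuous F)
    (hgpos : ∀ t ∈ Set.Icc 0 T, 0 ≤ g t)
    (hFpos : ∀ t ∈ Set.Icc 0 T, 0 ≤ F t)
    (hineq : ∀ t ∈ Set.Icc 0 T,
      (1 / 2) * deriv (fun s => (g s) ^ 2) t + c * (g t) ^ 2 ≤ g t * F t) :
    ∀ t ∈ Set.Icc 0 T,
      g t + c * ∫ s in (0 : ℝ)..t, g s ≤ g 0 + ∫ s in (0 : ℝ)..t, F s := by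
  intro t ⟨ht0, htT⟩
  have hgd : Differentiable ℝ g := hg.differentiable one_ne_zero
  have hsub : Ioo 0 t ⊆ Icc 0 T := Ioo_subset_Icc_self.trans (Icc_subset_Icc_right htT)
  refine add_mul_integral_le_add_integral_of_mul_deriv_le ht0 hc hgd.continuous.continuousOn
    (fun x _ => hgd x) hF.continuousOn (hgpos 0 ⟨le_rfl, ht0.trans htT⟩)
    (fun x hx => hFpos x (hsub hx)) fun x hx => ?_
  have hdsq : deriv (fun s => g s ^ 2) x = 2 * g x * deriv g x := by
    rw [((hgd x).hasDerivAt.fun_pow 2).deriv]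
    ring
  linarith [hdsq ▸ hineq x (hsub hx)]

/-- If `g : [0,T] → [0,∞)` is `C¹`, `F ≥ 0` is continuous, `c ≥ 0` and
`(1/2)(g²)' + c g² ≤ g F` on `[0,T]`, then `g(t) + c ∫₀ᵗ g ≤ g(0) + ∫₀ᵗ F`. -/
theorem stmt6 (T c : ℝ) (hT : 0 ≤ T) (hc : 0 ≤ c)
    (g F : ℝ → ℝ) (hg : ContDiff ℝ 1 g) (hF : Continuous F)
    (hgpos : ∀ t ∈ Set.Icc 0 T, 0 ≤ g t)
    (hFpos : ∀ t ∈ Set.Icc 0 T, 0 ≤ F t)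
    (hineq : ∀ t ∈ Set.Icc 0 T,
      (1 / 2) * deriv (fun s => (g s) ^ 2) t + c * (g t) ^ 2 ≤ g t * F t) :
    ∀ t ∈ Set.Icc 0 T,
      g t + c * ∫ s in (0 : ℝ)..t, g s ≤ g 0 + ∫ s in (0 : ℝ)..t, F s :=
  stmt6_general T c hc g F hg hF hgpos hFpos hineq
end
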